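/- For every integer n ≥ 2, there exists a matrix B over the field ZMod 3, with rows indexed by the even-weight vertices of the n-dimensional hypercube Q_n and columns indexed by the odd-weight vertices of Q_n (each index set having size 2^(n-1)), such that B x y ≠ 0 if and only if x and y are adjacent in Q_n, and the rank of B over ZMod 3 is exactly 2^(n-2). -/

import Mathlib

/-- The `n`-dimensional hypercube graph: vertices are elements of `{0,1}^n`,
adjacent iff they differ in exactly one coordinate. -/
def hypercube (n : ℕ) : SimpleGraph (Fin n → ZMod 2) where
  Adj x y := ∃! i, x i ≠ y i
  symm := ⟨by rintro x y ⟨i, hi, hu⟩; exact ⟨i, Ne.symm hi, fun j hj => hu j (Ne.symm hj)⟩⟩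
  loopless := ⟨by rintro x ⟨i, hi, -⟩; exact hi rfl⟩

/-- The even-weight vertices of the hypercube `Q_n`. -/
def evenV (n : ℕ) : Type := {x : Fin n → ZMod 2 // ∑ i, x i = 0}

/-- The odd-weight vertices of the hypercube `Q_n`. -/
def oddV (n : ℕ) : Type := {x : Fin n → ZMod 2 // ∑ i, x i ≠ 0}

instance (n : ℕ) : Fintype (evenV n) := by unfold evenV; infer_instance
instance (n : ℕ) : Fintype (oddV n) := by unfold oddV; infer_instance
instance (n : ℕ) : DecidableEq (evenV n) := by unfold evenV; infer_instance
instance (n : ℕ) : DecidableEq (oddV n) := by unfold oddV; infer_instance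

/-! Following Huang's signing of the hypercube, give the edge from `x` to `x + eᵢ` the sign
`εᵢ(x) = (-1)^(∑_{j ∈ Sᵢ} x j)`, where `Sᵢ = {j | j < i}`, enlarged by `i` itself for the first
`k` directions. The two paths `x → x + eᵢ → x + eᵢ + eⱼ` and `x → x + eⱼ → x + eᵢ + eⱼ` then carry
opposite signs, so the signed adjacency matrix `M` satisfies `M² = (n - 2k) • 1`; choosing
`k ≤ n - 1` with `n ≡ 2k (mod 3)` makes `M² = 0` over `ZMod 3`.

Since `M` swaps the two parity classes, its even-to-odd block `B` and odd-to-even block `B'` satisfy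
`B * B' = 0`, and since no sign depends on the last coordinate, flipping that coordinate identifies
`B'` with `B`; hence `2 rank B ≤ 2^(n-1)`. Conversely, restricting `B` to the rows with last
coordinate `1` and to their neighbours across the last direction gives a diagonal submatrix with
nonzero diagonal, so `rank B ≥ 2^(n-2)`. -/

open Finset Matrix

lemma Matrix.submatrix_mul_submatrix_compl_of_apply_eq_zero {α R : Type*} [Fintype α]
    [CommRing R] (p : α → Prop) [DecidablePred p] (M N : Matrix α α R)
    (h : ∀ x y, p x → p y → M x y = 0) :
    (M.submatrix Subtype.val Subtype.val : Matrix {x // p x} {x // ¬ p x} R) *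
      (N.submatrix Subtype.val Subtype.val : Matrix {x // ¬ p x} {x // p x} R) =
      (M * N).submatrix Subtype.val Subtype.val := by
  ext x z
  simp only [mul_apply, submatrix_apply]
  have hp : ∑ y : {y // p y}, M x y * N y z = 0 :=
    sum_eq_zero fun y _ => by rw [h x y x.2 y.2, zero_mul]
  rw [← Fintype.sum_subtype_add_sum_subtype p fun y => M x y * N y z, hp, zero_add]

lemma Matrix.card_le_rank_of_apply_ne_zero_iff {ι m n R : Type*} [Fintype ι] [Fintype n]
    [Field R] (A : Matrix m n R) (r : ι → m) (c : ι → n)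
    (h : ∀ i j, A (r i) (c j) ≠ 0 ↔ i = j) : Fintype.card ι ≤ A.rank := by
  classical
  have hdiag : A.submatrix r c = diagonal fun i => A (r i) (c i) := by
    ext i j
    obtain rfl | hij := eq_or_ne i j
    · rw [submatrix_apply, diagonal_apply_eq]
    · rw [submatrix_apply, diagonal_apply_ne _ hij, ← not_ne_iff, h]
      exact hij
  calc Fintype.card ι = Fintype.card {i // A (r i) (c i) ≠ 0} :=
        Fintype.card_congr (Equiv.subtypeUnivEquiv fun i => (h i i).mpr rfl).symm
    _ = (A.submatrix r c).rank := by rw [hdiag, rank_diagonal]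
    _ ≤ A.rank := rank_submatrix_le A r c

section Cube

variable {n : ℕ}

lemma add_single_add_single (x : Fin n → ZMod 2) (i : Fin n) :
    x + Pi.single i 1 + Pi.single i 1 = x := by
  rw [add_assoc, ← Pi.single_add, show (1 + 1 : ZMod 2) = 0 from rfl, Pi.single_zero, add_zero]

lemma add_single_injective (x : Fin n → ZMod 2) :
    Function.Injective fun i : Fin n => x + Pi.single i 1 := by
  intro i j h
  by_contra hij
  have := congrFun (add_left_cancel h) i
  simp [hij] at this

lemma sum_add_single (x : Fin n → ZMod 2) (i : Fin n) :
    ∑ j, (x + Pi.single i 1 : Fin n → ZMod 2) j = ∑ j, x j + 1 := by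
  simp [sum_add_distrib]

lemma hypercube_adj_iff {x y : Fin n → ZMod 2} :
    (hypercube n).Adj x y ↔ ∃ i, y = x + Pi.single i 1 := by
  have hne : ∀ a b : ZMod 2, a ≠ b ↔ b = a + 1 := by decide
  constructor
  · rintro ⟨i, hi, hu⟩
    refine ⟨i, funext fun j => ?_⟩
    by_cases hj : j = i
    · subst hj
      simpa using (hne _ _).mp hi
    · simpa [hj] using (not_imp_comm.mp (hu j) hj).symm
  · rintro ⟨i, rfl⟩
    refine ⟨i, by simp, fun j hj => by_contra fun hji => hj ?_⟩
    simp [hji]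

lemma sum_eq_add_one_of_adj {x y : Fin n → ZMod 2} (h : (hypercube n).Adj x y) :
    ∑ j, y j = ∑ j, x j + 1 := by
  obtain ⟨i, rfl⟩ := hypercube_adj_iff.mp h
  exact sum_add_single x i

lemma sum_snoc {m : ℕ} (u : Fin m → ZMod 2) (a : ZMod 2) :
    ∑ i, (Fin.snoc u a : Fin (m + 1) → ZMod 2) i = ∑ i, u i + a := by
  simp [Fin.sum_univ_castSucc]

lemma snoc_adj_snoc_iff {m : ℕ} (u v : Fin m → ZMod 2) :
    (hypercube (m + 1)).Adj (Fin.snoc u 1) (Fin.snoc v 0) ↔ u = v := by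
  rw [hypercube_adj_iff]
  constructor
  · rintro ⟨i, hi⟩
    induction i using Fin.lastCases with
    | last => exact funext fun j => by simpa using (congrFun hi j.castSucc).symm
    | cast i => simpa [Fin.castSucc_ne_last] using congrFun hi (Fin.last m)
  · rintro rfl
    refine ⟨Fin.last m, funext fun j => ?_⟩
    induction j using Fin.lastCases with
    | last => simp; rfl
    | cast j => simp [Fin.castSucc_ne_last]

end Cube

section SignedAdjacency

variable {R : Type*} [CommRing R] {n : ℕ}

def signSet (k : ℕ) (i : Fin n) : Finset (Fin n) := {j | j < i ∨ j = i ∧ (i : ℕ) < k}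

lemma mem_signSet_self {k : ℕ} {i : Fin n} : i ∈ signSet k i ↔ (i : ℕ) < k := by
  simp [signSet]

lemma mem_signSet_of_ne {k : ℕ} {i j : Fin n} (h : j ≠ i) : j ∈ signSet k i ↔ j < i := by
  simp [signSet, h]

lemma last_notMem_signSet {k m : ℕ} (hk : k ≤ m) (i : Fin (m + 1)) :
    Fin.last m ∉ signSet k i := by
  simp only [signSet, mem_filter, mem_univ, true_and, not_or, not_and]
  exact ⟨not_lt.mpr (Fin.le_last i), fun h => by rw [← h, Fin.val_last]; omega⟩

variable (R) in
def edgeSign (k : ℕ) (i : Fin n) (x : Fin n → ZMod 2) : R :=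
  (-1) ^ (∑ j ∈ signSet k i, x j).val

lemma edgeSign_mul_self (k : ℕ) (i : Fin n) (x : Fin n → ZMod 2) :
    edgeSign R k i x * edgeSign R k i x = 1 := by
  rw [edgeSign, ← pow_add, ← two_mul, pow_mul]
  simp

lemma edgeSign_add_single (k : ℕ) (i j : Fin n) (x : Fin n → ZMod 2) :
    edgeSign R k i (x + Pi.single j 1) =
      (if j ∈ signSet k i then -1 else 1) * edgeSign R k i x := by
  have hval : ∀ a : ZMod 2, (-1 : R) ^ (a + 1).val = -(-1) ^ a.val := by
    intro a
    obtain rfl | rfl : a = 0 ∨ a = 1 := by revert a; decide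
    · simp [ZMod.val_one]
    · simp [show (1 + 1 : ZMod 2) = 0 from rfl, ZMod.val_one]
  simp only [edgeSign, Pi.add_apply, sum_add_distrib, sum_pi_single']
  split_ifs
  · rw [hval, neg_one_mul]
  · rw [add_zero, one_mul]

lemma edgeSign_anticomm (k : ℕ) {i j : Fin n} (h : i ≠ j) (x : Fin n → ZMod 2) :
    edgeSign R k i x * edgeSign R k j (x + Pi.single i 1) =
      -(edgeSign R k j x * edgeSign R k i (x + Pi.single j 1)) := by
  simp only [edgeSign_add_single, mem_signSet_of_ne h, mem_signSet_of_ne h.symm]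
  rcases h.lt_or_gt with hij | hji
  · simp [hij, hij.not_gt, mul_comm]
  · simp [hji, hji.not_gt, mul_comm]

variable (R) in
def signedAdj (k : ℕ) : Matrix (Fin n → ZMod 2) (Fin n → ZMod 2) R :=
  of fun x y => ∑ i, if y = x + Pi.single i 1 then edgeSign R k i x else 0

lemma signedAdj_apply_add_single (k : ℕ) (x : Fin n → ZMod 2) (i : Fin n) :
    signedAdj R k x (x + Pi.single i 1) = edgeSign R k i x := by
  simp [signedAdj, (add_single_injective x).eq_iff, eq_comm (a := i)]

lemma signedAdj_eq_zero_of_not_adj (k : ℕ) {x y : Fin n → ZMod 2}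
    (h : ¬ (hypercube n).Adj x y) : signedAdj R k x y = 0 := by
  rw [hypercube_adj_iff, not_exists] at h
  simp [signedAdj, h]

lemma signedAdj_ne_zero_iff [Nontrivial R] (k : ℕ) (x y : Fin n → ZMod 2) :
    signedAdj R k x y ≠ 0 ↔ (hypercube n).Adj x y := by
  refine ⟨not_imp_comm.mp (signedAdj_eq_zero_of_not_adj k), fun h => ?_⟩
  obtain ⟨i, rfl⟩ := hypercube_adj_iff.mp h
  rw [signedAdj_apply_add_single]
  exact left_ne_zero_of_mul_eq_one (edgeSign_mul_self k i x)

lemma signedAdj_mul_signedAdj_apply (k : ℕ) (x z : Fin n → ZMod 2) :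
    (signedAdj R k * signedAdj R k : Matrix (Fin n → ZMod 2) _ R) x z = ∑ i, ∑ j,
      if z = x + Pi.single i 1 + Pi.single j 1 then
        edgeSign R k i x * edgeSign R k j (x + Pi.single i 1) else 0 := by
  simp only [mul_apply, signedAdj, of_apply, sum_mul, ite_mul, zero_mul]
  rw [sum_comm]
  simp [mul_sum, mul_ite]

lemma signedAdj_mul_signedAdj_apply_self {k : ℕ} (hk : k ≤ n) (x : Fin n → ZMod 2) :
    (signedAdj R k * signedAdj R k : Matrix (Fin n → ZMod 2) _ R) x x = n - 2 * k := by
  have hdiag (i : Fin n) : edgeSign R k i x * edgeSign R k i (x + Pi.single i 1) =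
      1 - 2 * if (i : ℕ) < k then 1 else 0 := by
    simp only [edgeSign_add_single, mem_signSet_self, mul_left_comm _ (ite _ _ _),
      edgeSign_mul_self, mul_one]
    split_ifs <;> ring
  have hback (i j : Fin n) : x = x + Pi.single i 1 + Pi.single j 1 ↔ i = j := by
    nth_rw 1 [← add_single_add_single x i]
    exact (add_single_injective _).eq_iff
  simp only [signedAdj_mul_signedAdj_apply, hback, sum_ite_eq, mem_univ, if_true, hdiag,
    sum_sub_distrib, ← mul_sum, sum_boole, sum_const, card_univ, Fintype.card_fin,
    Fin.card_filter_val_lt, min_eq_right hk, nsmul_eq_mul, mul_one]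

lemma signedAdj_mul_signedAdj_apply_of_ne (k : ℕ) {x z : Fin n → ZMod 2} (h : z ≠ x) :
    (signedAdj R k * signedAdj R k : Matrix (Fin n → ZMod 2) _ R) x z = 0 := by
  rw [signedAdj_mul_signedAdj_apply, ← sum_product']
  refine sum_ninvolution Prod.swap (fun ⟨i, j⟩ => ?_) (fun ⟨i, j⟩ hne hij => ?_)
    (fun _ => mem_univ _) Prod.swap_swap
  · obtain rfl | hij := eq_or_ne i j
    · simp [add_single_add_single, h]
    · have hswap : x + Pi.single j 1 + Pi.single i 1 = x + Pi.single i 1 + Pi.single j 1 :=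
        add_right_comm _ _ _
      simp only [Prod.swap, hswap]
      split_ifs
      · exact add_eq_zero_iff_eq_neg.mpr (edgeSign_anticomm k hij x)
      · exact add_zero 0
  · obtain rfl : i = j := congrArg Prod.fst hij |>.symm
    simp [add_single_add_single, h] at hne

lemma signedAdj_mul_self {k : ℕ} (hk : k ≤ n) :
    signedAdj R k * signedAdj R k = ((n : R) - 2 * k) • (1 : Matrix (Fin n → ZMod 2) _ R) := by
  ext x z
  obtain rfl | h := eq_or_ne z x
  · simp [signedAdj_mul_signedAdj_apply_self hk]
  · simp [signedAdj_mul_signedAdj_apply_of_ne k h, one_apply_ne' h]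

lemma signedAdj_add_single_last {k m : ℕ} (hk : k ≤ m) (x y : Fin (m + 1) → ZMod 2) :
    signedAdj R k (x + Pi.single (Fin.last m) 1) (y + Pi.single (Fin.last m) 1) =
      signedAdj R k x y := by
  simp only [signedAdj, of_apply, edgeSign_add_single, last_notMem_signSet hk, if_false, one_mul,
    add_right_comm x (Pi.single (Fin.last m) 1), add_left_inj]

end SignedAdjacency

section Blocks

variable {n : ℕ}

def evenEquivOdd (i : Fin n) : evenV n ≃ oddV n where
  toFun x := ⟨x.1 + Pi.single i 1, by rw [sum_add_single, x.2]; decide⟩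
  invFun y := ⟨y.1 + Pi.single i 1, by
    rw [sum_add_single, Fin.eq_one_of_ne_zero _ y.2]; rfl⟩
  left_inv x := Subtype.ext (add_single_add_single _ _)
  right_inv y := Subtype.ext (add_single_add_single _ _)

lemma card_evenV_add_card_oddV :
    Fintype.card (evenV n) + Fintype.card (oddV n) = 2 ^ n := by
  rw [← Fintype.card_sum]
  refine (Fintype.card_congr (Equiv.sumCompl fun x : Fin n → ZMod 2 => ∑ i, x i = 0)).trans ?_
  simp

lemma card_evenV_succ (m : ℕ) : Fintype.card (evenV (m + 1)) = 2 ^ m := by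
  have h := card_evenV_add_card_oddV (n := m + 1)
  rw [← Fintype.card_congr (evenEquivOdd 0), pow_succ] at h
  omega

lemma card_oddV_succ (m : ℕ) : Fintype.card (oddV (m + 1)) = 2 ^ m := by
  rw [← Fintype.card_congr (evenEquivOdd 0), card_evenV_succ]

variable (R : Type*) [CommRing R]

def evenOddBlock (n k : ℕ) : Matrix (evenV n) (oddV n) R :=
  (signedAdj R k).submatrix Subtype.val Subtype.val

def oddEvenBlock (n k : ℕ) : Matrix (oddV n) (evenV n) R :=
  (signedAdj R k).submatrix Subtype.val Subtype.val

lemma evenOddBlock_mul_oddEvenBlock_eq_zero {k : ℕ} (hk : k ≤ n) (hR : (n : R) = 2 * k) :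
    evenOddBlock R n k * oddEvenBlock R n k = 0 := by
  have h := submatrix_mul_submatrix_compl_of_apply_eq_zero
    (fun x : Fin n → ZMod 2 => ∑ i, x i = 0) (signedAdj R k) (signedAdj R k) fun x y hx hy =>
      signedAdj_eq_zero_of_not_adj k fun hxy => by simp [sum_eq_add_one_of_adj hxy, hx] at hy
  rw [signedAdj_mul_self hk, hR, sub_self, zero_smul] at h
  exact h

lemma oddEvenBlock_eq_submatrix {k m : ℕ} (hk : k ≤ m) :
    oddEvenBlock R (m + 1) k =
      (evenOddBlock R (m + 1) k).submatrix (evenEquivOdd (Fin.last m)).symm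
        (evenEquivOdd (Fin.last m)) := by
  ext y x
  exact (signedAdj_add_single_last hk y.1 x.1).symm

end Blocks

section Rank

variable (R : Type*) [Field R]

lemma two_mul_rank_evenOddBlock_le {k m : ℕ} (hk : k ≤ m) (hR : ((m + 1 : ℕ) : R) = 2 * k) :
    2 * (evenOddBlock R (m + 1) k).rank ≤ 2 ^ m := by
  have h := rank_add_rank_le_card_of_mul_eq_zero
    (evenOddBlock_mul_oddEvenBlock_eq_zero R (by omega : k ≤ m + 1) hR)
  rwa [oddEvenBlock_eq_submatrix R hk, rank_submatrix, card_oddV_succ, ← two_mul] at h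

lemma card_oddV_le_rank_evenOddBlock (m k : ℕ) :
    Fintype.card (oddV m) ≤ (evenOddBlock R (m + 1) k).rank := by
  have hodd (u : oddV m) : ∑ i, u.1 i = 1 := Fin.eq_one_of_ne_zero _ u.2
  refine (evenOddBlock R (m + 1) k).card_le_rank_of_apply_ne_zero_iff
    (fun u => ⟨Fin.snoc u.1 1, by rw [sum_snoc, hodd]; rfl⟩)
    (fun u => ⟨Fin.snoc u.1 0, by rw [sum_snoc, hodd]; decide⟩) fun u v => ?_
  exact (signedAdj_ne_zero_iff k _ _).trans ((snoc_adj_snoc_iff u.1 v.1).trans Subtype.ext_iff.symm)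

end Rank

lemma exists_le_pred_natCast_eq_two_mul {n : ℕ} (hn : 2 ≤ n) :
    ∃ k ≤ n - 1, (n : ZMod 3) = 2 * k := by
  refine ⟨2 * n % 3, ?_, ?_⟩
  · obtain rfl | hn := hn.eq_or_lt
    · decide
    · have := Nat.mod_lt (2 * n) three_pos
      omega
  · have h3 : (3 : ZMod 3) = 0 := rfl
    rw [ZMod.natCast_mod]
    push_cast
    linear_combination (-n : ZMod 3) * h3

/-- For every `n ≥ 2` there is a matrix `B` over `ZMod 3`, with rows indexed by the
even-weight vertices of `Q_n` and columns by the odd-weight vertices (each index set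
of size `2^(n-1)`), nonzero exactly at adjacent pairs, whose rank is `2^(n-2)`. -/
theorem exists_weighted_adjacency_rank (n : ℕ) (hn : 2 ≤ n) :
    ∃ B : Matrix (evenV n) (oddV n) (ZMod 3),
      (∀ (x : evenV n) (y : oddV n), B x y ≠ 0 ↔ (hypercube n).Adj x.val y.val) ∧
      B.rank = 2 ^ (n - 2) ∧
      Fintype.card (evenV n) = 2 ^ (n - 1) ∧
      Fintype.card (oddV n) = 2 ^ (n - 1) := by
  obtain ⟨m, rfl⟩ : ∃ m, n = m + 1 + 1 := ⟨n - 2, by omega⟩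
  obtain ⟨k, hk, hR⟩ := exists_le_pred_natCast_eq_two_mul hn
  have hlower := card_oddV_le_rank_evenOddBlock (ZMod 3) (m + 1) k
  have hupper := two_mul_rank_evenOddBlock_le (ZMod 3) (m := m + 1) hk hR
  rw [card_oddV_succ] at hlower
  rw [pow_succ] at hupper
  refine ⟨evenOddBlock (ZMod 3) (m + 1 + 1) k, fun x y => signedAdj_ne_zero_iff k x.1 y.1,
    ?_, card_evenV_succ _, card_oddV_succ _⟩
  show _ = 2 ^ m
  omega
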